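/- arXiv:2006.14971 — 4 statements merged into one kernel-verified Lean document; each statement's English description precedes it below -/
import Mathlib

section
/- Fix reals a, b, c and λ > 0 with λ·|b| ≤ 1. For reals α, β and p, q > 0 define the interface flux F(α, β, p, q) = α·p if α ≥ 0 and β > 0; F(α, β, p, q) = β·q if α < 0 and β ≤ 0; and F(α, β, p, q) = 0 otherwise. Then the one-step update map (p₁, p₂, p₃) ↦ p₂ − λ·( F(b, c, p₂, p₃) − F(a, b, p₁, p₂) ) is nondecreasing in each of its three arguments p₁, p₂, p₃ on (0,∞)³. -/
noncomputable section

theorem stmt0 (a b c lam : ℝ) (hlam : 0 < lam) (hcfl : lam * |b| ≤ 1)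
    (F : ℝ → ℝ → ℝ → ℝ → ℝ)
    (hF : ∀ α β p q : ℝ, F α β p q =
      if 0 ≤ α ∧ 0 < β then α * p
      else if α < 0 ∧ β ≤ 0 then β * q
      else 0)
    (H : ℝ → ℝ → ℝ → ℝ)
    (hH : ∀ p₁ p₂ p₃ : ℝ, H p₁ p₂ p₃ = p₂ - lam * (F b c p₂ p₃ - F a b p₁ p₂)) :
    (∀ p₁ q₁ p₂ p₃ : ℝ, 0 < p₁ → 0 < q₁ → 0 < p₂ → 0 < p₃ → p₁ ≤ q₁ →
        H p₁ p₂ p₃ ≤ H q₁ p₂ p₃) ∧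
    (∀ p₁ p₂ q₂ p₃ : ℝ, 0 < p₁ → 0 < p₂ → 0 < q₂ → 0 < p₃ → p₂ ≤ q₂ →
        H p₁ p₂ p₃ ≤ H p₁ q₂ p₃) ∧
    (∀ p₁ p₂ p₃ q₃ : ℝ, 0 < p₁ → 0 < p₂ → 0 < p₃ → 0 < q₃ → p₃ ≤ q₃ →
        H p₁ p₂ p₃ ≤ H p₁ p₂ q₃) := by
  have h1 : lam * b ≤ 1 := le_trans (by nlinarith [le_abs_self b]) hcfl
  have h2 : -1 ≤ lam * b := by nlinarith [neg_abs_le b]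
  refine ⟨?_, ?_, ?_⟩
  · intro p₁ q₁ p₂ p₃ h1p h2p h3p h4p hle
    simp only [hH, hF]
    split_ifs <;> (try casesm* _ ∧ _) <;> nlinarith [mul_nonneg hlam.le (sub_nonneg.2 hle)]
  · intro p₁ p₂ q₂ p₃ h1p h2p h3p h4p hle
    simp only [hH, hF]
    split_ifs <;> (try casesm* _ ∧ _) <;> nlinarith [mul_nonneg hlam.le (sub_nonneg.2 hle)]
  · intro p₁ p₂ p₃ q₃ h1p h2p h3p h4p hle
    simp only [hH, hF]
    split_ifs <;> (try casesm* _ ∧ _) <;> nlinarith [mul_nonneg hlam.le (sub_nonneg.2 hle)]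
end
end

section
/- Under the CFL-like condition λ·sup_{j∈ℤ} |g(u_j)| ≤ 1, the updated densities satisfy ρ_i' ≥ 0 for every i ∈ ℤ; if moreover λ·sup_{j∈ℤ} |g(u_j)| < 1, then ρ_i' > 0 for every i ∈ ℤ. -/
open MeasureTheory Filter

noncomputable section

/-- Density numerical flux at interface `i+1/2`. -/
def Frho (g : ℝ → ℝ) (ρ w : ℤ → ℝ) (i : ℤ) : ℝ :=
  if 0 ≤ g (w i / ρ i) ∧ 0 < g (w (i+1) / ρ (i+1)) then ρ i * g (w i / ρ i)
  else if g (w i / ρ i) < 0 ∧ g (w (i+1) / ρ (i+1)) ≤ 0 then ρ (i+1) * g (w (i+1) / ρ (i+1))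
  else 0

/-- Momentum numerical flux at interface `i+1/2`. -/
def Fmom (g : ℝ → ℝ) (ρ w : ℤ → ℝ) (i : ℤ) : ℝ :=
  max (max (w i) 0 * g (max (w i) 0 / ρ i))
      (min (w (i+1)) 0 * g (min (w (i+1)) 0 / ρ (i+1)))

/-- One step of the first-order (DDF) scheme: updated density. -/
def rhoNext (g : ℝ → ℝ) (lam : ℝ) (ρ w : ℤ → ℝ) (i : ℤ) : ℝ :=
  ρ i - lam * (Frho g ρ w i - Frho g ρ w (i-1))

/-- One step of the first-order (DDF) scheme: updated momentum. -/
def wNext (g : ℝ → ℝ) (lam : ℝ) (ρ w : ℤ → ℝ) (i : ℤ) : ℝ :=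
  w i - lam * (Fmom g ρ w i - Fmom g ρ w (i-1))

theorem stmt1 (g : ℝ → ℝ) (hg0 : g 0 = 0) (hgc : Continuous g) (hgm : Monotone g)
    (lam : ℝ) (hlam : 0 < lam) (ρ w : ℤ → ℝ) (hρ : ∀ i, 0 < ρ i) :
    ((∀ j, lam * |g (w j / ρ j)| ≤ 1) → ∀ i, 0 ≤ rhoNext g lam ρ w i) ∧
    ((∃ G : ℝ, (∀ j, |g (w j / ρ j)| ≤ G) ∧ lam * G < 1) →
      ∀ i, 0 < rhoNext g lam ρ w i) := by
  have key : ∀ i, ρ i * (1 - lam * |g (w i / ρ i)|) ≤ rhoNext g lam ρ w i := by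
    intro i
    have hρi := hρ i
    set a := g (w i / ρ i) with ha
    have h1 : Frho g ρ w i ≤ ρ i * max a 0 := by
      unfold Frho
      rw [← ha]
      split_ifs with h h2
      · exact mul_le_mul_of_nonneg_left (le_max_left _ _) hρi.le
      · have : ρ (i+1) * g (w (i+1) / ρ (i+1)) ≤ 0 :=
          mul_nonpos_of_nonneg_of_nonpos (hρ _).le h2.2
        exact this.trans (mul_nonneg hρi.le (le_max_right a 0))
      · exact mul_nonneg hρi.le (le_max_right a 0)
    have h2 : ρ i * min a 0 ≤ Frho g ρ w (i-1) := by
      unfold Frho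
      have e : i - 1 + 1 = i := by ring
      rw [e, ← ha]
      split_ifs with h h2
      · have h0 : (0:ℝ) ≤ ρ (i-1) * g (w (i-1) / ρ (i-1)) := mul_nonneg (hρ _).le h.1
        exact (mul_nonpos_of_nonneg_of_nonpos hρi.le (min_le_right a 0)).trans h0
      · exact mul_le_mul_of_nonneg_left (min_le_left a 0) hρi.le
      · exact mul_nonpos_of_nonneg_of_nonpos hρi.le (min_le_right a 0)
    have habs : max a 0 - min a 0 = |a| := by
      rcases le_total a 0 with h | h
      · simp [max_eq_right h, min_eq_left h, abs_of_nonpos h]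
      · simp [max_eq_left h, min_eq_right h, abs_of_nonneg h]
    unfold rhoNext
    have h1' := mul_le_mul_of_nonneg_left h1 hlam.le
    have h2' := mul_le_mul_of_nonneg_left h2 hlam.le
    have h3 : lam * (ρ i * (max a 0 - min a 0)) = lam * (ρ i * |a|) := by rw [habs]
    nlinarith [h1', h2', h3]
  constructor
  · intro hcfl i
    have h1 : 0 ≤ 1 - lam * |g (w i / ρ i)| := by linarith [hcfl i]
    exact le_trans (mul_nonneg (hρ i).le h1) (key i)
  · rintro ⟨G, hG, hGlt⟩ i
    have h1 : lam * |g (w i / ρ i)| ≤ lam * G :=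
      mul_le_mul_of_nonneg_left (hG i) hlam.le
    have h2 : 0 < 1 - lam * |g (w i / ρ i)| := by linarith
    exact lt_of_lt_of_le (mul_pos (hρ i) h2) (key i)
end
end

section
/- Let S : ℝ → ℝ be any function and fix i ∈ ℤ with u_i ≠ u_{i+1}. Then the quantity [ (u_{i+1}·Fρ_{i+1/2} − Fw_{i+1/2})·S(u_i) + S(u_{i+1})·(Fw_{i+1/2} − Fρ_{i+1/2}·u_i) ] / ( u_{i+1} − u_i ) equals: S(u_i)·ρ_i·g(u_i) if g(u_i) ≥ 0 and g(u_{i+1}) > 0; S(u_{i+1})·ρ_{i+1}·g(u_{i+1}) if g(u_i) < 0 and g(u_{i+1}) ≤ 0; 0 if g(u_i) < 0 and g(u_{i+1}) > 0; and Fw_{i+1/2}·( S(u_{i+1}) − S(u_i) )/( u_{i+1} − u_i ) if g(u_i) ≥ 0 and g(u_{i+1}) ≤ 0. -/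
open MeasureTheory Filter

noncomputable section

theorem stmt9 (g : ℝ → ℝ) (hg0 : g 0 = 0) (hgc : Continuous g) (hgm : Monotone g)
    (ρ w : ℤ → ℝ) (hρ : ∀ i, 0 < ρ i)
    (S : ℝ → ℝ) (i : ℤ) (hu : w i / ρ i ≠ w (i+1) / ρ (i+1)) :
    ((0 ≤ g (w i / ρ i) ∧ 0 < g (w (i+1) / ρ (i+1)) →
      ((w (i+1) / ρ (i+1) * Frho g ρ w i - Fmom g ρ w i) * S (w i / ρ i)
        + S (w (i+1) / ρ (i+1)) * (Fmom g ρ w i - Frho g ρ w i * (w i / ρ i)))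
        / (w (i+1) / ρ (i+1) - w i / ρ i)
      = S (w i / ρ i) * (ρ i * g (w i / ρ i)))) ∧
    ((g (w i / ρ i) < 0 ∧ g (w (i+1) / ρ (i+1)) ≤ 0 →
      ((w (i+1) / ρ (i+1) * Frho g ρ w i - Fmom g ρ w i) * S (w i / ρ i)
        + S (w (i+1) / ρ (i+1)) * (Fmom g ρ w i - Frho g ρ w i * (w i / ρ i)))
        / (w (i+1) / ρ (i+1) - w i / ρ i)
      = S (w (i+1) / ρ (i+1)) * (ρ (i+1) * g (w (i+1) / ρ (i+1))))) ∧
    ((g (w i / ρ i) < 0 ∧ 0 < g (w (i+1) / ρ (i+1)) →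
      ((w (i+1) / ρ (i+1) * Frho g ρ w i - Fmom g ρ w i) * S (w i / ρ i)
        + S (w (i+1) / ρ (i+1)) * (Fmom g ρ w i - Frho g ρ w i * (w i / ρ i)))
        / (w (i+1) / ρ (i+1) - w i / ρ i)
      = 0)) ∧
    ((0 ≤ g (w i / ρ i) ∧ g (w (i+1) / ρ (i+1)) ≤ 0 →
      ((w (i+1) / ρ (i+1) * Frho g ρ w i - Fmom g ρ w i) * S (w i / ρ i)
        + S (w (i+1) / ρ (i+1)) * (Fmom g ρ w i - Frho g ρ w i * (w i / ρ i)))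
        / (w (i+1) / ρ (i+1) - w i / ρ i)
      = Fmom g ρ w i * (S (w (i+1) / ρ (i+1)) - S (w i / ρ i))
          / (w (i+1) / ρ (i+1) - w i / ρ i))) := by
  have hρi := hρ i
  have hρi1 := hρ (i+1)
  have hsub : w (i+1) / ρ (i+1) - w i / ρ i ≠ 0 := sub_ne_zero.mpr (Ne.symm hu)
  have hwi : (w i / ρ i) * ρ i = w i := div_mul_cancel₀ _ hρi.ne'
  have hwi1 : (w (i+1) / ρ (i+1)) * ρ (i+1) = w (i+1) := div_mul_cancel₀ _ hρi1.ne'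
  -- first term of Fmom when g(u_i) ≥ 0
  have T1pos : 0 ≤ g (w i / ρ i) →
      max (w i) 0 * g (max (w i) 0 / ρ i) = w i * g (w i / ρ i) := by
    intro h
    rcases le_or_gt 0 (w i) with hw | hw
    · rw [max_eq_left hw]
    · have hneg : w i / ρ i < 0 := div_neg_of_neg_of_pos hw hρi
      have hga : g (w i / ρ i) ≤ 0 := hg0 ▸ hgm hneg.le
      have hz : g (w i / ρ i) = 0 := le_antisymm hga h
      rw [max_eq_right hw.le, hz, zero_mul, mul_zero]
  -- first term of Fmom when g(u_i) < 0
  have T1neg : g (w i / ρ i) < 0 →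
      max (w i) 0 * g (max (w i) 0 / ρ i) = 0 := by
    intro h
    have hw : w i ≤ 0 := by
      by_contra hc
      push_neg at hc
      have : 0 < w i / ρ i := div_pos hc hρi
      have : 0 ≤ g (w i / ρ i) := hg0 ▸ hgm this.le
      linarith
    rw [max_eq_right hw, zero_mul]
  -- second term of Fmom when g(u_{i+1}) > 0
  have T2pos : 0 < g (w (i+1) / ρ (i+1)) →
      min (w (i+1)) 0 * g (min (w (i+1)) 0 / ρ (i+1)) = 0 := by
    intro h
    have hw : 0 ≤ w (i+1) := by
      by_contra hc
      push_neg at hc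
      have : w (i+1) / ρ (i+1) < 0 := div_neg_of_neg_of_pos hc hρi1
      have : g (w (i+1) / ρ (i+1)) ≤ 0 := hg0 ▸ hgm this.le
      linarith
    rw [min_eq_right hw, zero_mul]
  -- second term of Fmom when g(u_{i+1}) ≤ 0
  have T2neg : g (w (i+1) / ρ (i+1)) ≤ 0 →
      min (w (i+1)) 0 * g (min (w (i+1)) 0 / ρ (i+1))
        = w (i+1) * g (w (i+1) / ρ (i+1)) := by
    intro h
    rcases le_or_gt (w (i+1)) 0 with hw | hw
    · rw [min_eq_left hw]
    · have hpos : 0 < w (i+1) / ρ (i+1) := div_pos hw hρi1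
      have hga : 0 ≤ g (w (i+1) / ρ (i+1)) := hg0 ▸ hgm hpos.le
      have hz : g (w (i+1) / ρ (i+1)) = 0 := le_antisymm h hga
      rw [min_eq_right hw.le, hz, zero_mul, mul_zero]
  refine ⟨?_, ?_, ?_, ?_⟩
  · rintro ⟨h1, h2⟩
    have hF : Frho g ρ w i = ρ i * g (w i / ρ i) := by
      rw [Frho, if_pos ⟨h1, h2⟩]
    have hM : Fmom g ρ w i = w i * g (w i / ρ i) := by
      rw [Fmom, T1pos h1, T2pos h2]
      apply max_eq_left
      rcases le_or_gt 0 (w i) with hw | hw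
      · exact mul_nonneg hw h1
      · have hneg : w i / ρ i < 0 := div_neg_of_neg_of_pos hw hρi
        have hga : g (w i / ρ i) ≤ 0 := hg0 ▸ hgm hneg.le
        have hz : g (w i / ρ i) = 0 := le_antisymm hga h1
        rw [hz, mul_zero]
    rw [hF, hM, div_eq_iff hsub]
    linear_combination (-(g (w i / ρ i)) * (S (w (i+1) / ρ (i+1)) - S (w i / ρ i))) * hwi
  · rintro ⟨h1, h2⟩
    have hF : Frho g ρ w i = ρ (i+1) * g (w (i+1) / ρ (i+1)) := by
      rw [Frho, if_neg (by rintro ⟨ha, _⟩; linarith), if_pos ⟨h1, h2⟩]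
    have hM : Fmom g ρ w i = w (i+1) * g (w (i+1) / ρ (i+1)) := by
      rw [Fmom, T1neg h1, T2neg h2]
      apply max_eq_right
      rcases le_or_gt (w (i+1)) 0 with hw | hw
      · nlinarith [mul_nonneg (neg_nonneg.2 hw) (neg_nonneg.2 h2)]
      · have hpos : 0 < w (i+1) / ρ (i+1) := div_pos hw hρi1
        have hga : 0 ≤ g (w (i+1) / ρ (i+1)) := hg0 ▸ hgm hpos.le
        have hz : g (w (i+1) / ρ (i+1)) = 0 := le_antisymm h2 hga
        rw [hz, mul_zero]
    rw [hF, hM, div_eq_iff hsub]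
    linear_combination (g (w (i+1) / ρ (i+1)) * (S (w i / ρ i) - S (w (i+1) / ρ (i+1)))) * hwi1
  · rintro ⟨h1, h2⟩
    have hF : Frho g ρ w i = 0 := by
      rw [Frho, if_neg (by rintro ⟨ha, _⟩; linarith), if_neg (by rintro ⟨_, hb⟩; linarith)]
    have hM : Fmom g ρ w i = 0 := by
      rw [Fmom, T1neg h1, T2pos h2, max_self]
    rw [hF, hM]
    ring
  · rintro ⟨h1, h2⟩
    have hF : Frho g ρ w i = 0 := by
      rw [Frho, if_neg (by rintro ⟨_, hb⟩; linarith), if_neg (by rintro ⟨ha, _⟩; linarith)]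
    rw [hF]
    ring
end
end

section
/- Let a ≥ 0 ≥ b and ρ_l, ρ_r ∈ ℝ. Define ρ̄ : ℝ → ℝ by ρ̄(x) = ρ_l for x < 0 and ρ̄(x) = ρ_r for x > 0, and define the flux function along ρ̄ by F(x) = a·ρ_l for x < 0 and F(x) = b·ρ_r for x > 0. Then for every test function φ ∈ C_c^∞( ℝ × (0,∞) ): ∫_0^∞ ∫_ℝ ( ρ̄(x)·∂_tφ(x,t) + F(x)·∂_xφ(x,t) ) dx dt + ∫_0^∞ t·(a·ρ_l − b·ρ_r)·∂_tφ(0,t) dt = 0. -/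
open MeasureTheory Filter Topology Set

noncomputable section

private lemma isometry_mk_right0 (x : ℝ) : Isometry (fun t : ℝ => (x, t)) := by
  intro s t; simp [Prod.edist_eq]

private lemma isometry_mk_left' (t : ℝ) : Isometry (fun x : ℝ => (x, t)) := by
  intro s u; simp [Prod.edist_eq]

private lemma hcs_tendsto_atTop' {ψ : ℝ → ℝ} (h : HasCompactSupport ψ) :
    Tendsto ψ atTop (𝓝 0) := by
  have hev : ∀ᶠ t in Filter.cocompact ℝ, ψ t = 0 := by
    filter_upwards [h.compl_mem_cocompact] with t ht
    exact image_eq_zero_of_notMem_tsupport ht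
  have hle : (Filter.atTop : Filter ℝ) ≤ Filter.cocompact ℝ := by
    rw [cocompact_eq_atBot_atTop]; exact le_sup_right
  have heq : ψ =ᶠ[Filter.atTop] (fun _ => (0:ℝ)) := hev.filter_mono hle
  exact (tendsto_congr' heq).mpr tendsto_const_nhds

private lemma hcs_tendsto_atBot' {ψ : ℝ → ℝ} (h : HasCompactSupport ψ) :
    Tendsto ψ atBot (𝓝 0) := by
  have hev : ∀ᶠ t in Filter.cocompact ℝ, ψ t = 0 := by
    filter_upwards [h.compl_mem_cocompact] with t ht
    exact image_eq_zero_of_notMem_tsupport ht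
  have hle : (Filter.atBot : Filter ℝ) ≤ Filter.cocompact ℝ := by
    rw [cocompact_eq_atBot_atTop]; exact le_sup_left
  have heq : ψ =ᶠ[Filter.atBot] (fun _ => (0:ℝ)) := hev.filter_mono hle
  exact (tendsto_congr' heq).mpr tendsto_const_nhds

private lemma myIoi' {f f' : ℝ → ℝ} {a m : ℝ}
    (hderiv : ∀ x, HasDerivAt f (f' x) x) (hc : Continuous f')
    (hs : HasCompactSupport f') (hm : Tendsto f atTop (𝓝 m)) :
    ∫ x in Ioi a, f' x = m - f a :=
  integral_Ioi_of_hasDerivAt_of_tendsto (hderiv a).continuousAt.continuousWithinAt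
    (fun x _ => hderiv x) (hc.integrable_of_hasCompactSupport hs).integrableOn hm

private lemma myIio' {f f' : ℝ → ℝ} {a m : ℝ}
    (hderiv : ∀ x, HasDerivAt f (f' x) x) (hc : Continuous f')
    (hs : HasCompactSupport f') (hm : Tendsto f atBot (𝓝 m)) :
    ∫ x in Iio a, f' x = f a - m := by
  have key : ∫ x in Ioi (-a), (fun y => -(f' (-y))) x = m - f (-(-a)) := by
    apply myIoi' (f := fun y => f (-y))
    · intro x
      have h1 := (hderiv (-x)).comp x (hasDerivAt_neg x)
      simpa [Function.comp_def] using h1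
    · exact (hc.comp continuous_neg).neg
    · have : HasCompactSupport (fun y => f' (-y)) :=
        hs.comp_isClosedEmbedding (Homeomorph.neg ℝ).isClosedEmbedding
      exact this.neg
    · exact hm.comp tendsto_neg_atTop_atBot
  have h2 := integral_comp_neg_Iic a (fun y => f' (-y))
  simp only [neg_neg] at h2 key
  calc ∫ x in Iio a, f' x = ∫ x in Iic a, f' x := setIntegral_congr_set Iio_ae_eq_Iic
    _ = ∫ x in Ioi (-a), f' (-x) := h2
    _ = -∫ x in Ioi (-a), -(f' (-x)) := by rw [integral_neg, neg_neg]
    _ = f a - m := by rw [key]; ring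


set_option maxHeartbeats 1000000 in
theorem stmt14 (a b ρl ρr : ℝ) (ha : 0 ≤ a) (hb : b ≤ 0)
    (φ : ℝ → ℝ → ℝ) (hφ : ContDiff ℝ (⊤ : ℕ∞) (Function.uncurry φ))
    (hφsupp : HasCompactSupport (Function.uncurry φ))
    (hφ0 : ∀ x t : ℝ, t ≤ 0 → φ x t = 0) :
    (∫ t in Set.Ioi (0:ℝ), ∫ x : ℝ,
        ((if x < 0 then ρl else ρr) * deriv (fun s => φ x s) t
          + (if x < 0 then a * ρl else b * ρr) * deriv (fun y => φ y t) x))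
      + (∫ t in Set.Ioi (0:ℝ), t * (a * ρl - b * ρr) * deriv (fun s => φ 0 s) t) = 0 := by
  have hdiff : Differentiable ℝ (Function.uncurry φ) := hφ.differentiable (by simp)
  set Φ := Function.uncurry φ with hΦdef
  set P : ℝ × ℝ → ℝ := fun p => fderiv ℝ Φ p (0, 1) with hPdef
  set Q : ℝ × ℝ → ℝ := fun p => fderiv ℝ Φ p (1, 0) with hQdef
  have hfd : Continuous (fun p : ℝ × ℝ => fderiv ℝ Φ p) := hφ.continuous_fderiv (by simp)
  have hPc : Continuous P := hfd.clm_apply continuous_const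
  have hQc : Continuous Q := hfd.clm_apply continuous_const
  have hPs : HasCompactSupport P := hφsupp.fderiv_apply ℝ ((0:ℝ), (1:ℝ))
  have hQs : HasCompactSupport Q := hφsupp.fderiv_apply ℝ ((1:ℝ), (0:ℝ))
  -- partial derivatives
  have hdt : ∀ x t : ℝ, HasDerivAt (fun s => φ x s) (P (x, t)) t := by
    intro x t
    have h1 : HasDerivAt (fun s : ℝ => ((x : ℝ), s)) ((0 : ℝ), (1 : ℝ)) t :=
      (hasDerivAt_const t x).prodMk (hasDerivAt_id t)
    have h2 := (hdiff (x, t)).hasFDerivAt.comp_hasDerivAt t h1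
    exact h2
  have hdx : ∀ x t : ℝ, HasDerivAt (fun y => φ y t) (Q (x, t)) x := by
    intro x t
    have h1 : HasDerivAt (fun y : ℝ => (y, (t : ℝ))) ((1 : ℝ), (0 : ℝ)) x :=
      (hasDerivAt_id x).prodMk (hasDerivAt_const x t)
    have h2 := (hdiff (x, t)).hasFDerivAt.comp_hasDerivAt x h1
    exact h2
  have hderP : ∀ x t : ℝ, deriv (fun s => φ x s) t = P (x, t) := fun x t => (hdt x t).deriv
  have hderQ : ∀ x t : ℝ, deriv (fun y => φ y t) x = Q (x, t) := fun x t => (hdx x t).deriv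
  simp only [hderP, hderQ]
  -- slice facts
  have hφc : Continuous Φ := hφ.continuous
  have hmk_right : ∀ x : ℝ, Topology.IsClosedEmbedding (fun t : ℝ => (x, t)) :=
    fun x => (isometry_mk_right0 x).isClosedEmbedding
  have hmk_left : ∀ t : ℝ, Topology.IsClosedEmbedding (fun x : ℝ => (x, t)) :=
    fun t => (isometry_mk_left' t).isClosedEmbedding
  have hPt_c : ∀ x : ℝ, Continuous fun t => P (x, t) :=
    fun x => hPc.comp (continuous_const.prodMk continuous_id)
  have hPt_s : ∀ x : ℝ, HasCompactSupport fun t => P (x, t) :=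
    fun x => hPs.comp_isClosedEmbedding (hmk_right x)
  have hPx_c : ∀ t : ℝ, Continuous fun x => P (x, t) :=
    fun t => hPc.comp (continuous_id.prodMk continuous_const)
  have hPx_s : ∀ t : ℝ, HasCompactSupport fun x => P (x, t) :=
    fun t => hPs.comp_isClosedEmbedding (hmk_left t)
  have hQx_c : ∀ t : ℝ, Continuous fun x => Q (x, t) :=
    fun t => hQc.comp (continuous_id.prodMk continuous_const)
  have hQx_s : ∀ t : ℝ, HasCompactSupport fun x => Q (x, t) :=
    fun t => hQs.comp_isClosedEmbedding (hmk_left t)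
  have hφt_s : ∀ x : ℝ, HasCompactSupport fun t => φ x t :=
    fun x => hφsupp.comp_isClosedEmbedding (hmk_right x)
  have hφx_s : ∀ t : ℝ, HasCompactSupport fun x => φ x t :=
    fun t => hφsupp.comp_isClosedEmbedding (hmk_left t)
  -- key t-integral of P vanishes
  have innerT : ∀ x : ℝ, ∫ t in Set.Ioi (0:ℝ), P (x, t) = 0 := by
    intro x
    have h := myIoi' (a := 0) (fun t => hdt x t) (hPt_c x) (hPt_s x)
      (hcs_tendsto_atTop' (hφt_s x))
    rw [h, hφ0 x 0 le_rfl, sub_zero]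
  -- x-integrals of Q
  have hIio : ∀ t : ℝ, ∫ x in Set.Iio (0:ℝ), Q (x, t) = φ 0 t := by
    intro t
    have h := myIio' (a := 0) (fun x => hdx x t) (hQx_c t) (hQx_s t)
      (hcs_tendsto_atBot' (hφx_s t))
    rw [h, sub_zero]
  have hIoi : ∀ t : ℝ, ∫ x in Set.Ioi (0:ℝ), Q (x, t) = -(φ 0 t) := by
    intro t
    have h := myIoi' (a := 0) (fun x => hdx x t) (hQx_c t) (hQx_s t)
      (hcs_tendsto_atTop' (hφx_s t))
    rw [h, zero_sub]
  -- integrability in x for fixed t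
  have hmeas1 : AEStronglyMeasurable (fun x : ℝ => if x < 0 then ρl else ρr)
      (volume : Measure ℝ) :=
    ((measurable_const.ite measurableSet_Iio measurable_const)).aestronglyMeasurable
  have hbd1 : ∃ C, ∀ x : ℝ, ‖if x < 0 then ρl else ρr‖ ≤ C :=
    ⟨max ‖ρl‖ ‖ρr‖, fun x => by split_ifs; exacts [le_max_left _ _, le_max_right _ _]⟩
  have hmeas2 : AEStronglyMeasurable (fun x : ℝ => if x < 0 then a * ρl else b * ρr)
      (volume : Measure ℝ) :=
    ((measurable_const.ite measurableSet_Iio measurable_const)).aestronglyMeasurable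
  have hbd2 : ∃ C, ∀ x : ℝ, ‖if x < 0 then a * ρl else b * ρr‖ ≤ C :=
    ⟨max ‖a * ρl‖ ‖b * ρr‖, fun x => by split_ifs; exacts [le_max_left _ _, le_max_right _ _]⟩
  have hIntX1 : ∀ t : ℝ, Integrable (fun x => (if x < 0 then ρl else ρr) * P (x, t)) :=
    fun t => ((hPx_c t).integrable_of_hasCompactSupport (hPx_s t)).bdd_mul hmeas1 (ae_of_all _ hbd1.choose_spec)
  have hIntX2 : ∀ t : ℝ, Integrable (fun x => (if x < 0 then a * ρl else b * ρr) * Q (x, t)) :=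
    fun t => ((hQx_c t).integrable_of_hasCompactSupport (hQx_s t)).bdd_mul hmeas2 (ae_of_all _ hbd2.choose_spec)
  -- inner x-integral
  have hInner : ∀ t : ℝ, (∫ x : ℝ, ((if x < 0 then ρl else ρr) * P (x, t)
        + (if x < 0 then a * ρl else b * ρr) * Q (x, t)))
      = (∫ x : ℝ, (if x < 0 then ρl else ρr) * P (x, t)) + (a * ρl - b * ρr) * φ 0 t := by
    intro t
    rw [integral_add (hIntX1 t) (hIntX2 t)]
    congr 1
    have hsplit := intervalIntegral.integral_Iic_add_Ioi (b := (0:ℝ)) ((hIntX2 t).integrableOn)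
      ((hIntX2 t).integrableOn)
    rw [← hsplit]
    have e1 : ∫ x in Set.Iic (0:ℝ), (if x < 0 then a * ρl else b * ρr) * Q (x, t)
        = a * ρl * φ 0 t := by
      rw [← setIntegral_congr_set Iio_ae_eq_Iic]
      rw [setIntegral_congr_fun measurableSet_Iio
        (g := fun x => a * ρl * Q (x, t)) (fun x hx => by have hx' : x < 0 := hx; simp [hx'])]
      rw [integral_const_mul, hIio t]
    have e2 : ∫ x in Set.Ioi (0:ℝ), (if x < 0 then a * ρl else b * ρr) * Q (x, t)
        = b * ρr * -(φ 0 t) := by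
      rw [setIntegral_congr_fun measurableSet_Ioi
        (g := fun x => b * ρr * Q (x, t)) (fun x hx => by have hx' : ¬ x < 0 := not_lt.mpr (le_of_lt hx); simp [hx'])]
      rw [integral_const_mul, hIoi t]
    rw [e1, e2]; ring
  -- Fubini for the P-part
  have hPswap_c : Continuous (fun q : ℝ × ℝ => P (q.2, q.1)) := hPc.comp continuous_swap
  have hPswap_s : HasCompactSupport (fun q : ℝ × ℝ => P (q.2, q.1)) :=
    hPs.comp_isClosedEmbedding (Homeomorph.prodComm ℝ ℝ).isClosedEmbedding
  have hG0 : Integrable (fun q : ℝ × ℝ => P (q.2, q.1)) volume :=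
    hPswap_c.integrable_of_hasCompactSupport hPswap_s
  have hGprod : Integrable (fun q : ℝ × ℝ => P (q.2, q.1))
      ((volume.restrict (Set.Ioi (0:ℝ))).prod volume) := by
    rw [Measure.restrict_prod_eq_prod_univ, ← Measure.volume_eq_prod]
    exact hG0.restrict
  have hmeasq : AEStronglyMeasurable (fun q : ℝ × ℝ => if q.2 < 0 then ρl else ρr)
      ((volume.restrict (Set.Ioi (0:ℝ))).prod volume) :=
    ((measurable_const.ite (measurableSet_lt measurable_snd measurable_const)
      measurable_const)).aestronglyMeasurable
  have hGint : Integrable (fun q : ℝ × ℝ => (if q.2 < 0 then ρl else ρr) * P (q.2, q.1))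
      ((volume.restrict (Set.Ioi (0:ℝ))).prod volume) :=
    hGprod.bdd_mul (c := max ‖ρl‖ ‖ρr‖) hmeasq
      (ae_of_all _ fun q => by split_ifs; exacts [le_max_left _ _, le_max_right _ _])
  have hdouble0 : ∫ t in Set.Ioi (0:ℝ), ∫ x : ℝ, (if x < 0 then ρl else ρr) * P (x, t) = 0 := by
    have hswap := integral_integral_swap
      (f := fun t x => (if x < 0 then ρl else ρr) * P (x, t))
      (μ := volume.restrict (Set.Ioi (0:ℝ))) (ν := volume) hGint
    rw [hswap]
    have hz : ∀ x : ℝ, ∫ t in Set.Ioi (0:ℝ), (if x < 0 then ρl else ρr) * P (x, t) = 0 := by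
      intro x; rw [integral_const_mul, innerT x, mul_zero]
    simp only [hz, integral_zero]
  have hIntT1 : Integrable (fun t => ∫ x : ℝ, (if x < 0 then ρl else ρr) * P (x, t))
      (volume.restrict (Set.Ioi (0:ℝ))) := hGint.integral_prod_left
  -- boundary term
  have hφ0c : Continuous fun t => φ 0 t := hφc.comp (continuous_const.prodMk continuous_id)
  have hIntφ0 : Integrable (fun t => φ 0 t) volume :=
    hφ0c.integrable_of_hasCompactSupport (hφt_s 0)
  have htP_c : Continuous (fun t : ℝ => t * P (0, t)) := continuous_id.mul (hPt_c 0)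
  have htP_s : HasCompactSupport (fun t : ℝ => t * P (0, t)) := (hPt_s 0).mul_left
  have htφ_s : HasCompactSupport (fun t : ℝ => t * φ 0 t) := (hφt_s 0).mul_left
  have hIBP : ∫ t in Set.Ioi (0:ℝ), (φ 0 t + t * P (0, t)) = 0 := by
    have h := myIoi' (a := 0) (f := fun t => t * φ 0 t)
      (f' := fun t => φ 0 t + t * P (0, t)) ?_ (hφ0c.add htP_c)
      ((hφt_s 0).add htP_s) (hcs_tendsto_atTop' htφ_s)
    · rw [h]; simp
    · intro t
      have h2 := (hasDerivAt_id t).mul (hdt 0 t)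
      simp only [id_eq, one_mul] at h2
      exact h2
  have hInttP : IntegrableOn (fun t : ℝ => t * P (0, t)) (Set.Ioi (0:ℝ)) :=
    (htP_c.integrable_of_hasCompactSupport htP_s).integrableOn
  have htPeq : ∫ t in Set.Ioi (0:ℝ), t * P (0, t) = -∫ t in Set.Ioi (0:ℝ), φ 0 t := by
    have hsum := integral_add (μ := volume.restrict (Set.Ioi (0:ℝ)))
      hIntφ0.integrableOn hInttP
    rw [hIBP] at hsum
    linarith [hsum]
  have hlast : ∫ t in Set.Ioi (0:ℝ), t * (a * ρl - b * ρr) * P (0, t)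
      = (a * ρl - b * ρr) * -(∫ t in Set.Ioi (0:ℝ), φ 0 t) := by
    have hre : ∀ t : ℝ, t * (a * ρl - b * ρr) * P (0, t)
        = (a * ρl - b * ρr) * (t * P (0, t)) := fun t => by ring
    simp only [hre]
    rw [integral_const_mul, htPeq]
  -- first double integral
  have hfirst : (∫ t in Set.Ioi (0:ℝ), ∫ x : ℝ,
        ((if x < 0 then ρl else ρr) * P (x, t)
          + (if x < 0 then a * ρl else b * ρr) * Q (x, t)))
      = (a * ρl - b * ρr) * ∫ t in Set.Ioi (0:ℝ), φ 0 t := by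
    calc (∫ t in Set.Ioi (0:ℝ), ∫ x : ℝ,
        ((if x < 0 then ρl else ρr) * P (x, t)
          + (if x < 0 then a * ρl else b * ρr) * Q (x, t)))
        = ∫ t in Set.Ioi (0:ℝ), ((∫ x : ℝ, (if x < 0 then ρl else ρr) * P (x, t))
            + (a * ρl - b * ρr) * φ 0 t) := integral_congr_ae (Filter.Eventually.of_forall hInner)
      _ = (∫ t in Set.Ioi (0:ℝ), ∫ x : ℝ, (if x < 0 then ρl else ρr) * P (x, t))
            + ∫ t in Set.Ioi (0:ℝ), (a * ρl - b * ρr) * φ 0 t :=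
          integral_add hIntT1 ((hIntφ0.const_mul _).integrableOn)
      _ = (a * ρl - b * ρr) * ∫ t in Set.Ioi (0:ℝ), φ 0 t := by
          rw [hdouble0, integral_const_mul, zero_add]
  rw [hfirst, hlast]
  ring
end
end
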